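/- arXiv:2508.21105 — 2 statements merged into one kernel-verified Lean document; each statement's English description precedes it below -/
import Mathlib

section
/- If for every set x there is a transitive set t containing x as a subset that reflects a given formula φ (i.e., φ holds in the universe iff its relativization to t holds, for all parameters from t), then the Collection scheme instance for φ holds: for all sets w and u, if for every x ∈ w there exists y with φ(x, y, u), then there is a set v such that for every x ∈ w there is y ∈ v with φ(x, y, u). -/
/-- RP (reflection for the formula `∃ y, φ x y u`) implies the Collection
scheme instance for `φ`. -/
theorem rp_implies_collection (φ : ZFSet → ZFSet → ZFSet → Prop)
    (RP : ∀ a : ZFSet, ∃ t : ZFSet, t.IsTransitive ∧ a ⊆ t ∧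
      ∀ x ∈ t, ∀ u ∈ t, ((∃ y, φ x y u) ↔ ∃ y ∈ t, φ x y u)) :
    ∀ w u : ZFSet, (∀ x ∈ w, ∃ y, φ x y u) →
      ∃ v : ZFSet, ∀ x ∈ w, ∃ y ∈ v, φ x y u := by
  intro w u hw
  obtain ⟨t, -, hsub, hreflect⟩ := RP (insert u w)
  have hu : u ∈ t := hsub (ZFSet.mem_insert u w)
  exact ⟨t, fun x hx => (hreflect x (hsub (ZFSet.mem_insert_of_mem u hx)) u hu).mp (hw x hx)⟩
end

section
/- If there is a well-ordering of the whole universe U (a type with a well-order whose initial segments are sets) then there exists an injective 'cardinality' map # on subsets of U, sending each X to 0 if X is equinumerous to U, and otherwise to (the code of) the least y such that X is equinumerous to the initial segment below y; this map satisfies Hume's Principle: #X = #Y ↔ (X is equinumerous to Y). -/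
/-! Every cardinal `c < #U` is the cardinality of an initial segment of the well-order `r`,
since `c.ord < (#U).ord ≤ type r`. Coding `#U` by `none` and every smaller cardinal by the
least `y` whose initial segment has that cardinality is therefore injective on cardinals
`≤ #U`, and `X ↦ code #X` satisfies Hume's Principle because `#X = #Y ↔ Nonempty (X ≃ Y)`. -/

open Cardinal

section

variable {U : Type*} (r : U → U → Prop) [IsWellOrder U r]

theorem exists_mk_initialSeg_eq_of_lt {c : Cardinal} (hc : c < #U) :
    ∃ y, #{x | r x y} = c := by
  have hlt : c.ord < Ordinal.type r := (ord_lt_ord.2 hc).trans_le (ord_le_type r)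
  obtain ⟨y, hy⟩ := Ordinal.typein_surj r hlt
  exact ⟨y, (Ordinal.card_typein y).symm.trans (by rw [hy, card_ord])⟩

open Classical in
noncomputable def cardCode (c : Cardinal) : Option U :=
  if c = #U then none
  else if h : ∃ y, #{x | r x y} = c then some ((IsWellFounded.wf : WellFounded r).min _ h)
  else none

variable {r}

theorem cardCode_eq_none_iff {c : Cardinal} (hc : c ≤ #U) : cardCode r c = none ↔ c = #U := by
  by_cases hU : c = #U
  · simp [cardCode, hU]
  · have hseg := exists_mk_initialSeg_eq_of_lt r (hc.lt_of_ne hU)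
    simp [cardCode, hU, hseg]

theorem cardCode_eq_some {c : Cardinal} {y : U} (h : cardCode r c = some y) :
    #{x | r x y} = c ∧ ∀ z, #{x | r x z} = c → ¬ r z y := by
  unfold cardCode at h
  split_ifs at h with hU hseg
  cases h
  have wf : WellFounded r := IsWellFounded.wf
  exact ⟨wf.min_mem _ hseg, fun _ hz => wf.not_lt_min _ hz⟩

theorem cardCode_injOn : Set.InjOn (cardCode r) (Set.Iic #U) := by
  intro c hc d hd hcd
  cases hcode : cardCode r c with
  | none =>
    exact ((cardCode_eq_none_iff hc).1 hcode).trans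
      ((cardCode_eq_none_iff hd).1 (hcd ▸ hcode)).symm
  | some y =>
    rw [← (cardCode_eq_some hcode).1, (cardCode_eq_some (hcd ▸ hcode)).1]

theorem cardCode_mk_eq_iff {X Y : Set U} :
    cardCode r #X = cardCode r #Y ↔ Nonempty (↥X ≃ ↥Y) :=
  (cardCode_injOn.eq_iff (mk_set_le X) (mk_set_le Y)).trans Cardinal.eq

end

/-- A global well-ordering yields a definable cardinality assignment fulfilling
Hume's Principle: `#X = none` iff `X` is equinumerous with the universe, and
otherwise `#X` is the least `y` such that `X` is equinumerous with the initial
segment `{x | r x y}`. -/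
theorem global_wellorder_gives_hume {U : Type*} (r : U → U → Prop)
    [IsWellOrder U r] :
    ∃ card : Set U → Option U,
      (∀ X Y : Set U, card X = card Y ↔ Nonempty (↥X ≃ ↥Y)) ∧
      (∀ X : Set U, card X = none ↔ Nonempty (↥X ≃ U)) ∧
      (∀ X : Set U, ∀ y : U, card X = some y →
        Nonempty (↥X ≃ ↥{x | r x y}) ∧
        ∀ z : U, Nonempty (↥X ≃ ↥{x | r x z}) → ¬ r z y) := by
  refine ⟨fun X => cardCode r #X, fun X Y => cardCode_mk_eq_iff,
    fun X => (cardCode_eq_none_iff (mk_set_le X)).trans Cardinal.eq, fun X y hy => ?_⟩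
  obtain ⟨hseg, hmin⟩ := cardCode_eq_some hy
  exact ⟨Cardinal.eq.1 hseg.symm, fun z ⟨e⟩ => hmin z (Cardinal.mk_congr e).symm⟩
end
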